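/- arXiv:2512.24597 — 3 statements merged into one kernel-verified Lean document; each statement's English description precedes it below -/
import Mathlib

section
/- Let (X, R, I) and (Y, Q, J) be finite relation partitions, (f, σ) a morphism, and for each i ∈ I let A_i be the 0-1 adjacency matrix of R⁻¹({i}) and for j ∈ J let B_j be that of Q⁻¹({j}). For g : X → ℂ define f_*g : Y → ℂ by f_*g(y) = Σ_{x ∈ f⁻¹(y)} g(x). Then for all g, h : X → ℂ and all j ∈ J: (B_j f_*g, f_*h) = Σ_{i ∈ σ⁻¹(j)} (A_i g, h), where (u, v) = Σ_x u(x) conj(v(x)) is the standard Hermitian product and (A g)(x') = Σ_x A(x, x') g(x). -/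
open Finset

noncomputable section RelPart

/-- A relation partition `(X, R, I)` is unital with unit `i₀` if `R⁻¹({i₀})` is the diagonal. -/
def IsUnital {X I : Type*} (R : X × X → I) (i₀ : I) : Prop :=
  ∀ p : X × X, R p = i₀ ↔ p.1 = p.2

/-- A relation partition is regular if every relation class has constant out- and in-valency. -/
def IsRegularRP {X I : Type*} (R : X × X → I) : Prop :=
  ∀ i : I, ∃ k : ℕ, ∀ x : X,
    Nat.card {x' : X // R (x, x') = i} = k ∧ Nat.card {x' : X // R (x', x) = i} = k

/-- The cardinality `#R⁻¹({i})` of the `i`-th relation. -/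
def relCard {X I : Type*} (R : X × X → I) (i : I) : ℕ :=
  Nat.card {p : X × X // R p = i}

open scoped Classical in
/-- `(A_i g)(x') = Σ_x A_i(x, x') g(x)` for the adjacency matrix `A_i` of `R⁻¹({i})`. -/
def adjApply {X I : Type*} [Fintype X] (R : X × X → I) (i : I) (g : X → ℂ) : X → ℂ :=
  fun x' => ∑ x : X, if R (x, x') = i then g x else 0

/-- The standard Hermitian product `(u, w) = Σ_x u(x) conj(w(x))`. -/
def herm {X : Type*} [Fintype X] (u w : X → ℂ) : ℂ :=
  ∑ x : X, u x * (starRingEnd ℂ) (w x)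

/-- The `i`-th inner distribution `λ_i = v · (A_i g, g) / #R⁻¹({i})`. -/
def innerDist {X I : Type*} [Fintype X] (R : X × X → I) (i : I) (g : X → ℂ) : ℂ :=
  (Fintype.card X : ℂ) * herm (adjApply R i g) g / (relCard R i : ℂ)

/-- `g` is `(v, k, λ)`-equi-distributed: mass `k` and `λ_i = λ` for all `i ≠ i₀`. -/
def IsEquiDist {X I : Type*} [Fintype X] (R : X × X → I) (i₀ : I) (g : X → ℂ)
    (k lam : ℂ) : Prop :=
  (∑ x : X, g x) = k ∧ ∀ i : I, i ≠ i₀ → innerDist R i g = lam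

open scoped Classical in
/-- The pushout `f_*g(y) = Σ_{x ∈ f⁻¹(y)} g(x)`. -/
def pushf {X Y : Type*} [Fintype X] (f : X → Y) (g : X → ℂ) : Y → ℂ :=
  fun y => ∑ x : X, if f x = y then g x else 0

end RelPart

/-! Pairing a pushforward against `u` is pairing against the pullback `u ∘ f`, so the left side
becomes `(f^* B_j f_* g, h)`. Since `Q ∘ (f × f) = σ ∘ R`, the pulled-back adjacency is that of the
coarsened partition `σ ∘ R`, whose `j`-class is the union of the `R`-classes over `σ⁻¹(j)`. -/

theorem herm_pushf_right {X Y : Type*} [Fintype X] [Fintype Y] (f : X → Y) (u : Y → ℂ)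
    (h : X → ℂ) : herm u (pushf f h) = herm (u ∘ f) h := by
  unfold herm pushf
  simp only [map_sum, apply_ite (starRingEnd ℂ), map_zero, Finset.mul_sum, mul_ite, mul_zero]
  rw [Finset.sum_comm]
  refine Finset.sum_congr rfl fun x _ => ?_
  rw [Fintype.sum_eq_single (f x) fun y hy => by simp [hy.symm]]
  simp

theorem adjApply_pushf_comp {X Y J : Type*} [Fintype X] [Fintype Y] (Q : Y × Y → J) (j : J)
    (f : X → Y) (g : X → ℂ) :
    adjApply Q j (pushf f g) ∘ f = adjApply (fun p => Q (f p.1, f p.2)) j g := by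
  funext x'
  unfold adjApply pushf
  simp only [Function.comp_apply, Finset.ite_sum_zero]
  rw [Finset.sum_comm]
  refine Finset.sum_congr rfl fun x _ => ?_
  rw [Fintype.sum_eq_single (f x) fun y hy => by simp [hy.symm]]
  simp

theorem adjApply_comp {X I J : Type*} [Fintype X] [Fintype I] [DecidableEq J]
    (R : X × X → I) (σ : I → J) (j : J) (g : X → ℂ) :
    adjApply (fun p => σ (R p)) j g = ∑ i with σ i = j, adjApply R i g := by
  funext x'
  unfold adjApply
  simp only [Finset.sum_apply, Finset.sum_filter, Finset.ite_sum_zero]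
  rw [Finset.sum_comm]
  refine Finset.sum_congr rfl fun x _ => ?_
  rw [Fintype.sum_eq_single (R (x, x')) fun i hi => by simp [Ne.symm hi]]
  simp

theorem herm_sum_left {X ι : Type*} [Fintype X] (s : Finset ι) (u : ι → X → ℂ) (w : X → ℂ) :
    herm (∑ i ∈ s, u i) w = ∑ i ∈ s, herm (u i) w := by
  simp only [herm, Finset.sum_apply, Finset.sum_mul]
  exact Finset.sum_comm

open scoped Classical in
theorem pushout_adjacency_general {X I Y J : Type*} [Fintype X] [Fintype Y] [Fintype I]
    (R : X × X → I) (Q : Y × Y → J)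
    (f : X → Y) (σ : I → J)
    (hm : ∀ x x' : X, Q (f x, f x') = σ (R (x, x')))
    (g h : X → ℂ) (j : J) :
    herm (adjApply Q j (pushf f g)) (pushf f h)
      = ∑ i : I, if σ i = j then herm (adjApply R i g) h else 0 := by
  have hQR : (fun p : X × X => Q (f p.1, f p.2)) = fun p => σ (R p) :=
    funext fun p => hm p.1 p.2
  rw [herm_pushf_right, adjApply_pushf_comp, hQR, adjApply_comp, herm_sum_left, Finset.sum_filter]

open scoped Classical in
/-- `(B_j f_*g, f_*h) = Σ_{i ∈ σ⁻¹(j)} (A_i g, h)`. -/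
theorem pushout_adjacency {X I Y J : Type*} [Fintype X] [Fintype Y] [Fintype I]
    (R : X × X → I) (Q : Y × Y → J)
    (hR : Function.Surjective R) (hQ : Function.Surjective Q)
    (f : X → Y) (σ : I → J)
    (hm : ∀ x x' : X, Q (f x, f x') = σ (R (x, x')))
    (g h : X → ℂ) (j : J) :
    herm (adjApply Q j (pushf f g)) (pushf f h)
      = ∑ i : I, if σ i = j then herm (adjApply R i g) h else 0 :=
  pushout_adjacency_general R Q f σ hm g h j
end

section
/- Let (f, σ) be a quotient morphism (i.e., f and σ are surjective) from a finite regular relation partition (X, R, I) to a finite unital relation partition (Y, Q, J). Then for every y ∈ Y, the fiber f⁻¹(y) has exactly #X / #Y elements. -/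
open Finset

/-
By unitality and the morphism identity, the fibre of `f` through `x` is the set of
`x'` with `σ (R (x, x')) = j₀`, i.e. the union of the out-neighbourhoods of `x` in the relations
`R⁻¹({i})` with `σ i = j₀`. By regularity each of these has a size independent of `x`, so all
fibres of the surjection `f` have the same size `c`, and `#X = #Y * c`.
-/

namespace IsRegularRP

variable {X I : Type*} [Fintype X] [DecidableEq I] {R : X × X → I}

theorem card_filter_rel_eq (hreg : IsRegularRP R) (i : I) (x₁ x₂ : X) :
    #{x' | R (x₁, x') = i} = #{x' | R (x₂, x') = i} := by
  obtain ⟨k, hk⟩ := hreg i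
  have hout : ∀ x, #{x' | R (x, x') = i} = k := fun x => by
    rw [← Fintype.card_subtype, ← Nat.card_eq_fintype_card]
    exact (hk x).1
  rw [hout, hout]

theorem card_filter_rel_mem_eq (hreg : IsRegularRP R) (t : Finset I) (x₁ x₂ : X) :
    #{x' | R (x₁, x') ∈ t} = #{x' | R (x₂, x') ∈ t} := by
  simp only [← sum_card_fiberwise_eq_card_filter]
  exact sum_congr rfl fun i _ => hreg.card_filter_rel_eq i x₁ x₂

end IsRegularRP

theorem Fintype.card_eq_mul_of_card_fiber_eq {X Y : Type*} [Fintype X] [Fintype Y]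
    [DecidableEq Y] {f : X → Y} {c : ℕ} (h : ∀ y, #{x | f x = y} = c) :
    Fintype.card X = Fintype.card Y * c := by
  rw [← card_univ, card_eq_sum_card_fiberwise (f := f) (t := univ) fun x _ => mem_univ (f x),
    sum_const_nat fun y _ => h y, card_univ]

theorem card_fiber_eq_of_isRegularRP_of_isUnital {X I Y J : Type*} [Fintype X] [DecidableEq Y]
    {R : X × X → I} {Q : Y × Y → J} {j₀ : J} (hreg : IsRegularRP R) (hQu : IsUnital Q j₀)
    {f : X → Y} {σ : I → J} (hm : ∀ x x' : X, Q (f x, f x') = σ (R (x, x'))) (x₁ x₂ : X) :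
    #{x | f x = f x₁} = #{x | f x = f x₂} := by
  classical
  let t : Finset I := {i ∈ univ.image R | σ i = j₀}
  have hfiber : ∀ x, univ.filter (f · = f x) = univ.filter fun x' => R (x, x') ∈ t := fun x => by
    ext x'
    have hmem : R (x, x') ∈ t ↔ σ (R (x, x')) = j₀ := by simp [t]
    rw [mem_filter, mem_filter, hmem, ← hm, hQu (f x, f x'), eq_comm]
  rw [hfiber, hfiber]
  exact hreg.card_filter_rel_mem_eq t x₁ x₂

theorem fiber_card_general {X I Y J : Type*} [Fintype X] [Fintype Y]
    (R : X × X → I) (Q : Y × Y → J)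
    (hreg : IsRegularRP R) (j₀ : J) (hQu : IsUnital Q j₀)
    (f : X → Y) (σ : I → J)
    (hm : ∀ x x' : X, Q (f x, f x') = σ (R (x, x')))
    (hf : Function.Surjective f)
    (y : Y) :
    Nat.card {x : X // f x = y} = Fintype.card X / Fintype.card Y := by
  classical
  have hfibers : ∀ y', #{x | f x = y'} = #{x | f x = y} := fun y' => by
    obtain ⟨x₁, rfl⟩ := hf y'
    obtain ⟨x₂, rfl⟩ := hf y
    exact card_fiber_eq_of_isRegularRP_of_isUnital hreg hQu hm x₁ x₂
  have hY : 0 < Fintype.card Y := Fintype.card_pos_iff.mpr ⟨y⟩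
  rw [Nat.card_eq_fintype_card, Fintype.card_subtype,
    Fintype.card_eq_mul_of_card_fiber_eq hfibers, Nat.mul_div_cancel_left _ hY]

/-- fibers of a quotient morphism from a finite regular relation partition
to a finite unital relation partition all have `#X / #Y` elements. -/
theorem fiber_card {X I Y J : Type*} [Fintype X] [Fintype Y]
    (R : X × X → I) (Q : Y × Y → J)
    (hR : Function.Surjective R) (hQ : Function.Surjective Q)
    (hreg : IsRegularRP R) (j₀ : J) (hQu : IsUnital Q j₀)
    (f : X → Y) (σ : I → J)
    (hm : ∀ x x' : X, Q (f x, f x') = σ (R (x, x')))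
    (hf : Function.Surjective f) (hσ : Function.Surjective σ)
    (y : Y) :
    Nat.card {x : X // f x = y} = Fintype.card X / Fintype.card Y :=
  fiber_card_general R Q hreg j₀ hQu f σ hm hf y
end

section
/- Pushout preserves equi-distributed functions: let (X, R, I) be a finite unital regular relation partition, (Y, Q, J) a finite unital relation partition, and (f, σ) a quotient morphism (f, σ surjective). If g : X → ℂ is a (#X, k, λ)-equi-distributed function, then f_*g : Y → ℂ, f_*g(y) = Σ_{x ∈ f⁻¹(y)} g(x), is a (#Y, k, (#X/#Y)·λ)-equi-distributed function. -/
open Finset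

/-!
For `j ≠ j₀` the pairs of `X` lying over `Q⁻¹({j})` are those of the relations `R⁻¹({i})` with
`σ i = j`, none of which is the diagonal; so `(A_j f_*g, f_*g)` is the sum of the
`(A_i g, g) = λ · #R⁻¹({i}) / #X` over them, namely `λ · #(f × f)⁻¹(Q⁻¹({j})) / #X`.
Since `Q` is unital, the fibre of `f` through `x` is `{z | σ (R (z, x)) = j₀}`, whose size does not
depend on `x` by regularity of `R`. With `K` this common size, `#X = K · #Y` and
`#(f × f)⁻¹(Q⁻¹({j})) = K² · #Q⁻¹({j})`, so `λ_j(f_*g) = #Y · λ · K² / #X = K · λ`.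
-/

open scoped Classical ComplexConjugate

section PairSums

variable {X Y I J : Type*} [Fintype X]

lemma relCard_eq_card_filter (R : X × X → I) (i : I) : relCard R i = #{p | R p = i} := by
  rw [relCard, Nat.card_eq_fintype_card, Fintype.card_subtype]

lemma herm_adjApply_self (R : X × X → I) (i : I) (g : X → ℂ) :
    herm (adjApply R i g) g = ∑ p with R p = i, g p.1 * conj (g p.2) := by
  rw [sum_filter, herm, Fintype.sum_prod_type, sum_comm]
  simp only [adjApply, sum_mul, ite_mul, zero_mul]

lemma pushf_mul_conj_pushf (f : X → Y) (g : X → ℂ) (q : Y × Y) :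
    pushf f g q.1 * conj (pushf f g q.2)
      = ∑ p with Prod.map f f p = q, g p.1 * conj (g p.2) := by
  simp only [pushf, ← sum_filter, map_sum, sum_mul_sum, ← sum_product', Prod.ext_iff,
    Prod.map_fst, Prod.map_snd, ← filter_product, univ_product_univ]

lemma herm_adjApply_pushf [Fintype Y] (Q : Y × Y → J) (j : J) (f : X → Y) (g : X → ℂ) :
    herm (adjApply Q j (pushf f g)) (pushf f g)
      = ∑ p with Q (Prod.map f f p) = j, g p.1 * conj (g p.2) := by
  rw [herm_adjApply_self, sum_filter, sum_filter, ← sum_fiberwise univ (Prod.map f f)]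
  refine sum_congr rfl fun q _ => ?_
  rw [pushf_mul_conj_pushf]
  split_ifs with hq
  · exact sum_congr rfl fun p hp => by rw [(mem_filter.1 hp).2, if_pos hq]
  · exact (sum_eq_zero fun p hp => by rw [(mem_filter.1 hp).2, if_neg hq]).symm

lemma sum_pushf [Fintype Y] (f : X → Y) (g : X → ℂ) : ∑ y, pushf f g y = ∑ x, g x := by
  simp only [pushf, ← sum_filter]
  exact sum_fiberwise univ f g

end PairSums

section InnerDistribution

variable {X I : Type*} [Fintype X] {R : X × X → I} {g : X → ℂ} {lam : ℂ}

lemma sum_filter_eq_of_innerDist_eq {i : I} (h : innerDist R i g = lam) :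
    ∑ p with R p = i, g p.1 * conj (g p.2) = lam * #{p | R p = i} / Fintype.card X := by
  rw [← herm_adjApply_self, ← relCard_eq_card_filter, ← h, innerDist]
  by_cases hc : #{p | R p = i} = 0
  · rw [herm_adjApply_self, filter_eq_empty_iff.2 fun p _ => ?_, sum_empty]
    · simp
    · exact fun hp => (card_ne_zero_of_mem (mem_filter.2 ⟨mem_univ p, hp⟩)) hc
  · obtain ⟨⟨x, -⟩, -⟩ := card_ne_zero.1 hc
    have hX : (Fintype.card X : ℂ) ≠ 0 := Nat.cast_ne_zero.2 (Fintype.card_pos_iff.2 ⟨x⟩).ne'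
    rw [relCard_eq_card_filter]
    field_simp

lemma sum_filter_comp_eq_of_innerDist_eq (P : I → Prop)
    (h : ∀ p, P (R p) → innerDist R (R p) g = lam) :
    ∑ p with P (R p), g p.1 * conj (g p.2) = lam * #{p | P (R p)} / Fintype.card X := by
  set s : Finset (X × X) := {p | P (R p)}
  have hmaps : ∀ p ∈ s, R p ∈ s.image R := fun p hp => mem_image_of_mem R hp
  rw [← sum_fiberwise_of_maps_to hmaps, card_eq_sum_card_fiberwise hmaps, Nat.cast_sum,
    mul_sum, sum_div]
  refine sum_congr rfl fun i hi => ?_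
  obtain ⟨p, hp, rfl⟩ := mem_image.1 hi
  have hfiber : s.filter (R · = R p) = univ.filter (R · = R p) := by
    ext p'
    simp only [s, mem_filter, mem_univ, true_and, and_iff_right_iff_imp]
    exact fun hp' => hp' ▸ (mem_filter.1 hp).2
  rw [hfiber, sum_filter_eq_of_innerDist_eq (h p (mem_filter.1 hp).2)]

end InnerDistribution

section Fibers

variable {X Y I J : Type*} [Fintype X]

lemma IsRegularRP.card_filter_eq {R : X × X → I} (hreg : IsRegularRP R) (i : I) (x x' : X) :
    #{z | R (z, x) = i} = #{z | R (z, x') = i} := by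
  obtain ⟨k, hk⟩ := hreg i
  have hcard : ∀ x, #{z | R (z, x) = i} = k := fun x => by
    rw [← (hk x).2, Nat.card_eq_fintype_card, Fintype.card_subtype]
  rw [hcard, hcard]

lemma IsRegularRP.card_filter_comp_eq {R : X × X → I} (hreg : IsRegularRP R) (P : I → Prop)
    (x x' : X) : #{z | P (R (z, x))} = #{z | P (R (z, x'))} := by
  set t : Finset I := (univ.image R).filter P
  have hmaps : ∀ x, Set.MapsTo (fun z => R (z, x)) ({z | P (R (z, x))} : Finset X) t :=
    fun x z hz => mem_filter.2 ⟨mem_image_of_mem R (mem_univ _), (mem_filter.1 hz).2⟩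
  have hfiber : ∀ x, ∀ i ∈ t,
      #{z ∈ {z | P (R (z, x))} | R (z, x) = i} = #{z | R (z, x) = i} := by
    intro x i hi
    rw [filter_filter]
    exact congrArg card (filter_congr fun z _ =>
      and_iff_right_of_imp fun hz => hz ▸ (mem_filter.1 hi).2)
  rw [card_eq_sum_card_fiberwise (hmaps x), card_eq_sum_card_fiberwise (hmaps x')]
  exact sum_congr rfl fun i hi => by rw [hfiber x i hi, hfiber x' i hi, hreg.card_filter_eq]

lemma card_fiber_eq_of_isRegularRP {R : X × X → I} {Q : Y × Y → J} {j₀ : J} {f : X → Y}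
    {σ : I → J} (hreg : IsRegularRP R) (hQu : IsUnital Q j₀)
    (hm : ∀ x x' : X, Q (f x, f x') = σ (R (x, x'))) (hf : Function.Surjective f) (y y' : Y) :
    #{x | f x = y} = #{x | f x = y'} := by
  have hfiber : ∀ x, #{z | f z = f x} = #{z | σ (R (z, x)) = j₀} := fun x =>
    congrArg card (filter_congr fun z _ => by rw [← hm, hQu])
  obtain ⟨x, rfl⟩ := hf y
  obtain ⟨x', rfl⟩ := hf y'
  rw [hfiber, hfiber, hreg.card_filter_comp_eq (σ · = j₀)]

variable {f : X → Y} {K : ℕ}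

lemma card_fiber_prodMap (hK : ∀ y, #{x | f x = y} = K) (q : Y × Y) :
    #{p | Prod.map f f p = q} = K ^ 2 := by
  simp only [Prod.ext_iff, Prod.map_fst, Prod.map_snd]
  rw [← univ_product_univ, filter_product (f · = q.1) (f · = q.2), card_product, hK, hK, sq]

variable [Fintype Y]

lemma card_filter_comp_eq_mul [DecidableEq Y] (hK : ∀ y, #{x | f x = y} = K) (P : Y → Prop) :
    #{x | P (f x)} = #{y | P y} * K := by
  have hmaps : Set.MapsTo f ({x | P (f x)} : Finset X) ({y | P y} : Finset Y) :=
    fun x hx => mem_filter.2 ⟨mem_univ _, (mem_filter.1 hx).2⟩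
  rw [card_eq_sum_card_fiberwise hmaps, ← smul_eq_mul, ← sum_const]
  refine sum_congr rfl fun y hy => ?_
  rw [filter_filter, ← hK y]
  exact congrArg card (filter_congr fun x _ =>
    and_iff_right_of_imp fun hx => hx ▸ (mem_filter.1 hy).2)

end Fibers

theorem pushout_preserves_equidist_general {X I Y J : Type*} [Fintype X] [Fintype Y]
    (R : X × X → I) (Q : Y × Y → J)
    (hQ : Function.Surjective Q)
    (i₀ : I) (hRu : IsUnital R i₀) (hreg : IsRegularRP R)
    (j₀ : J) (hQu : IsUnital Q j₀)
    (f : X → Y) (σ : I → J)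
    (hm : ∀ x x' : X, Q (f x, f x') = σ (R (x, x')))
    (hf : Function.Surjective f)
    (g : X → ℂ) (k lam : ℂ)
    (hg : IsEquiDist R i₀ g k lam) :
    IsEquiDist Q j₀ (pushf f g) k
      (((Fintype.card X : ℂ) / (Fintype.card Y : ℂ)) * lam) := by
  obtain ⟨hmass, hlam⟩ := hg
  refine ⟨(sum_pushf f g).trans hmass, fun j hj => ?_⟩
  obtain ⟨⟨y₀, _⟩, hy⟩ := hQ j
  obtain ⟨x₀, hx₀⟩ := hf y₀
  set K := #{x | f x = y₀}
  have hK : ∀ y, #{x | f x = y} = K := fun y => card_fiber_eq_of_isRegularRP hreg hQu hm hf y y₀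
  have hK0 : (K : ℂ) ≠ 0 :=
    Nat.cast_ne_zero.2 (card_ne_zero_of_mem (mem_filter.2 ⟨mem_univ _, hx₀⟩))
  have hY0 : (Fintype.card Y : ℂ) ≠ 0 := Nat.cast_ne_zero.2 (Fintype.card_pos_iff.2 ⟨y₀⟩).ne'
  have hQj : (relCard Q j : ℂ) ≠ 0 := by
    rw [relCard_eq_card_filter]
    exact Nat.cast_ne_zero.2 (card_ne_zero_of_mem (mem_filter.2 ⟨mem_univ _, hy⟩))
  have hX : Fintype.card X = Fintype.card Y * K := by
    simpa using card_filter_comp_eq_mul hK (fun _ => True)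
  have hpairs : #{p | Q (Prod.map f f p) = j} = relCard Q j * K ^ 2 := by
    rw [card_filter_comp_eq_mul (card_fiber_prodMap hK) (Q · = j), relCard_eq_card_filter]
  have hQR : ∀ p : X × X, Q (Prod.map f f p) = σ (R p) := fun p => hm p.1 p.2
  have hoff : ∀ p : X × X, σ (R p) = j → innerDist R (R p) g = lam := fun p hp =>
    hlam _ fun h => hj (by rw [← hp, ← hQR, (hQu _).2 (by simp [(hRu p).1 h])])
  have hherm : herm (adjApply Q j (pushf f g)) (pushf f g)
      = lam * (relCard Q j * K ^ 2) / Fintype.card X := by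
    rw [herm_adjApply_pushf]
    simp only [hQR] at hpairs ⊢
    rw [sum_filter_comp_eq_of_innerDist_eq (σ · = j) hoff, hpairs]
    push_cast
    ring
  rw [innerDist, hherm, hX]
  push_cast
  field_simp

/-- pushout along a quotient morphism preserves equi-distributed functions,
with parameters `(#Y, k, (#X/#Y)·λ)`. -/
theorem pushout_preserves_equidist {X I Y J : Type*} [Fintype X] [Fintype Y]
    (R : X × X → I) (Q : Y × Y → J)
    (hR : Function.Surjective R) (hQ : Function.Surjective Q)
    (i₀ : I) (hRu : IsUnital R i₀) (hreg : IsRegularRP R)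
    (j₀ : J) (hQu : IsUnital Q j₀)
    (f : X → Y) (σ : I → J)
    (hm : ∀ x x' : X, Q (f x, f x') = σ (R (x, x')))
    (hf : Function.Surjective f) (hσ : Function.Surjective σ)
    (g : X → ℂ) (k lam : ℂ)
    (hg : IsEquiDist R i₀ g k lam) :
    IsEquiDist Q j₀ (pushf f g) k
      (((Fintype.card X : ℂ) / (Fintype.card Y : ℂ)) * lam) :=
  pushout_preserves_equidist_general R Q hQ i₀ hRu hreg j₀ hQu f σ hm hf g k lam hg
end
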